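/- arXiv:2303.17445 — 5 statements merged into one kernel-verified Lean document; each statement's English description precedes it below -/
import Mathlib

section
/- Let h : ℝ² → ℝ be a C² function on a domain Ω satisfying h_xx·h_yy − h_xy² ≤ 0 everywhere. Then the graph z = h(x,y) satisfies the convex hull property: for every compact subdomain K ⊆ Ω, the graph of h over K is contained in the convex hull in ℝ³ of the graph of h restricted to ∂K. -/
/-!
Suppose a point `(q, h q)` of the graph over `K` lies outside the convex hull of the graph over
`∂K`. That hull is compact, so a linear functional `f` on `ℝ³` separates the point from it
strictly: `u := f ∘ graph` satisfies `u q > sup_{∂K} u`. Now `u = ℓ + t h` with `ℓ` linear and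
`t = f (0, 0, 1)`, so `D²u = t D²h` has determinant `t² det D²h ≤ 0` and some direction `v ≠ 0`
has `D²u (v, v) ≥ 0`. Adding `ε (x² + y²)` makes that second derivative positive, so
`u + ε (x² + y²)` has no interior local maximum and attains its maximum over `K` on `∂K`;
letting `ε → 0` gives `u q ≤ max_{∂K} u`, a contradiction.
-/

noncomputable def dX (f : ℝ × ℝ → ℝ) (p : ℝ × ℝ) : ℝ := fderiv ℝ f p (1, 0)
noncomputable def dY (f : ℝ × ℝ → ℝ) (p : ℝ × ℝ) : ℝ := fderiv ℝ f p (0, 1)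

open Set Filter Topology Module

theorem IsCompact.isCompact_frontier {X : Type*} [TopologicalSpace X] [T2Space X] {K : Set X}
    (hK : IsCompact K) : IsCompact (frontier K) :=
  hK.of_isClosed_subset isClosed_frontier hK.isClosed.frontier_subset

/-- By Carathéodory, `convexHull ℝ s` is the union over `k ≤ finrank ℝ E + 1` of the images of
`stdSimplex ℝ (Fin k) × sᵏ` under `(w, z) ↦ ∑ i, w i • z i`. -/
theorem IsCompact.convexHull_of_finiteDimensional {E : Type*} [NormedAddCommGroup E]
    [NormedSpace ℝ E] [FiniteDimensional ℝ E] {s : Set E} (hs : IsCompact s) :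
    IsCompact (convexHull ℝ s) := by
  set C : ℕ → Set E := fun k => (fun wz : (Fin k → ℝ) × (Fin k → E) => ∑ i, wz.1 i • wz.2 i) ''
    (stdSimplex ℝ (Fin k) ×ˢ univ.pi fun _ => s)
  suffices convexHull ℝ s = ⋃ k : Fin (finrank ℝ E + 2), C k by
    rw [this]
    exact isCompact_iUnion fun k =>
      ((isCompact_stdSimplex _ _).prod (isCompact_univ_pi fun _ => hs)).image (by fun_prop)
  refine Subset.antisymm (fun x hx => ?_) (iUnion_subset fun k => ?_)
  · obtain ⟨ι, _, z, w, hzs, hz, hw₀, hw₁, rfl⟩ := eq_pos_convex_span_of_mem_convexHull hx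
    have hcard : Fintype.card ι < finrank ℝ E + 2 := by
      have := Submodule.finrank_le (vectorSpan ℝ (range z))
      have := hz.card_le_finrank_succ
      omega
    let e := Fintype.equivFin ι
    refine mem_iUnion.2 ⟨⟨_, hcard⟩, (w ∘ e.symm, z ∘ e.symm), ⟨⟨fun i => (hw₀ _).le, ?_⟩,
      fun i _ => hzs ⟨_, rfl⟩⟩, e.symm.sum_comp fun i => w i • z i⟩
    simpa [e.symm.sum_comp] using hw₁
  · rintro _ ⟨⟨w, z⟩, ⟨hw, hz⟩, rfl⟩
    exact mem_convexHull_of_exists_fintype w z hw.1 hw.2 (fun i => hz i (mem_univ i)) rfl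

theorem IsCompact.exists_mem_frontier_isMaxOn {X β : Type*} [TopologicalSpace X] [LinearOrder β]
    [TopologicalSpace β] [ClosedIciTopology β] {K : Set X} {g : X → β} (hK : IsCompact K)
    (hne : K.Nonempty) (hg : ContinuousOn g K) (hg' : ∀ p ∈ interior K, ¬IsLocalMax g p) :
    ∃ p ∈ frontier K, IsMaxOn g K p := by
  obtain ⟨p, hpK, hmax⟩ := hK.exists_isMaxOn hne hg
  refine ⟨p, ⟨subset_closure hpK, fun hp => hg' p hp ?_⟩, hmax⟩
  exact hmax.isLocalMax (mem_interior_iff_mem_nhds.1 hp)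

theorem not_isLocalMax_of_hasDerivAt_deriv_pos {φ φ' : ℝ → ℝ} {x₀ D : ℝ}
    (hφ : ∀ᶠ x in 𝓝 x₀, HasDerivAt φ (φ' x) x) (hφ' : HasDerivAt φ' D x₀) (hD : 0 < D) :
    ¬IsLocalMax φ x₀ := by
  intro hmax
  have hsign := eventually_nhdsWithin_sign_eq_of_deriv_pos (hφ'.deriv ▸ hD)
    (hmax.hasDerivAt_eq_zero hφ.self_of_nhds)
  obtain ⟨r, hr, hball⟩ := Metric.eventually_nhds_iff.1 (hφ.and (hsign.and hmax))
  have hnear : ∀ x ∈ Icc x₀ (x₀ + r / 2), dist x x₀ < r := fun x hx => by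
    rw [Real.dist_eq, abs_of_nonneg (by linarith [hx.1])]
    linarith [hx.2]
  obtain ⟨c, hc, hslope⟩ := exists_hasDerivAt_eq_slope φ φ' (by linarith : x₀ < x₀ + r / 2)
    (fun x hx => (hball (hnear x hx)).1.continuousAt.continuousWithinAt)
    (fun x hx => (hball (hnear x (Ioo_subset_Icc_self hx))).1)
  have hpos : 0 < φ' c := by
    have := (hball (hnear c (Ioo_subset_Icc_self hc))).2.1
    rwa [sign_pos (sub_pos.2 hc.1), sign_eq_one_iff] at this
  have hle : φ (x₀ + r / 2) ≤ φ x₀ := (hball (hnear _ (right_mem_Icc.2 (by linarith)))).2.2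
  rw [hslope, div_pos_iff_of_pos_right (by linarith)] at hpos
  linarith

section LineRestriction

variable {E F : Type*} [NormedAddCommGroup E] [NormedSpace ℝ E] [NormedAddCommGroup F]
  [NormedSpace ℝ F] {f : E → F} {p v : E}

theorem DifferentiableAt.hasDerivAt_comp_add_smul {s : ℝ}
    (hf : DifferentiableAt ℝ f (p + s • v)) :
    HasDerivAt (fun s : ℝ => f (p + s • v)) (fderiv ℝ f (p + s • v) v) s := by
  have := hf.hasFDerivAt.comp_hasDerivAt s (((hasDerivAt_id s).smul_const v).const_add p)
  simpa [Function.comp_def] using this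

theorem fderiv_fderiv_apply (hf : DifferentiableAt ℝ (fderiv ℝ f) p) (u w : E) :
    fderiv ℝ (fun q => fderiv ℝ f q w) p u = fderiv ℝ (fderiv ℝ f) p u w := by
  simp [fderiv_clm_apply hf (differentiableAt_const w)]

end LineRestriction

theorem fderiv_fderiv_apply_self_eq_partials {h : ℝ × ℝ → ℝ} {p : ℝ × ℝ}
    (hh : ContDiffAt ℝ 2 h p) (v : ℝ × ℝ) : fderiv ℝ (fderiv ℝ h) p v v =
      v.1 ^ 2 * dX (dX h) p + 2 * v.1 * v.2 * dX (dY h) p + v.2 ^ 2 * dY (dY h) p := by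
  have hdiff : DifferentiableAt ℝ (fderiv ℝ h) p :=
    (hh.fderiv_right (m := 1) le_rfl).differentiableAt one_ne_zero
  have hxx : dX (dX h) p = fderiv ℝ (fderiv ℝ h) p (1, 0) (1, 0) := fderiv_fderiv_apply hdiff _ _
  have hxy : dX (dY h) p = fderiv ℝ (fderiv ℝ h) p (1, 0) (0, 1) := fderiv_fderiv_apply hdiff _ _
  have hyy : dY (dY h) p = fderiv ℝ (fderiv ℝ h) p (0, 1) (0, 1) := fderiv_fderiv_apply hdiff _ _
  have hv : v = v.1 • ((1, 0) : ℝ × ℝ) + v.2 • ((0, 1) : ℝ × ℝ) := by ext <;> simp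
  rw [hxx, hxy, hyy]
  conv_lhs => rw [hv]
  simp only [map_add, map_smul, add_apply, FunLike.coe_smul, Pi.smul_apply, smul_eq_mul,
    hh.isSymmSndFDerivAt (by simp) (0, 1) (1, 0)]
  ring

theorem exists_ne_zero_quadForm_nonneg {A B C : ℝ} (hdet : A * C - B ^ 2 ≤ 0) :
    ∃ v : ℝ × ℝ, v ≠ 0 ∧ 0 ≤ v.1 ^ 2 * A + 2 * v.1 * v.2 * B + v.2 ^ 2 * C := by
  rcases le_or_gt 0 A with hA | hA
  · exact ⟨(1, 0), by simp, by simpa using hA⟩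
  refine ⟨(B, -A), by simp [hA.ne], ?_⟩
  nlinarith [mul_nonneg (neg_nonneg.2 hA.le) (sub_nonneg.2 (sub_nonpos.1 hdet))]

theorem exists_ne_zero_mul_fderiv_fderiv_apply_nonneg {h : ℝ × ℝ → ℝ} {p : ℝ × ℝ}
    (hh : ContDiffAt ℝ 2 h p) (hsaddle : dX (dX h) p * dY (dY h) p - (dX (dY h) p) ^ 2 ≤ 0)
    (t : ℝ) : ∃ v : ℝ × ℝ, v ≠ 0 ∧ 0 ≤ t * fderiv ℝ (fderiv ℝ h) p v v := by
  obtain ⟨v, hv₀, hv⟩ := exists_ne_zero_quadForm_nonneg (A := t * dX (dX h) p)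
    (B := t * dX (dY h) p) (C := t * dY (dY h) p) (by nlinarith [sq_nonneg t])
  refine ⟨v, hv₀, ?_⟩
  rw [fderiv_fderiv_apply_self_eq_partials hh]
  linarith

theorem not_isLocalMax_comp_graph_add_sq {Ω : Set (ℝ × ℝ)} {h : ℝ × ℝ → ℝ} (hΩ : IsOpen Ω)
    (hC2 : ContDiffOn ℝ 2 h Ω)
    (hsaddle : ∀ p ∈ Ω, dX (dX h) p * dY (dY h) p - (dX (dY h) p) ^ 2 ≤ 0)
    (f : ℝ × ℝ × ℝ →L[ℝ] ℝ) {ε : ℝ} (hε : 0 < ε) {p : ℝ × ℝ} (hp : p ∈ Ω) :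
    ¬IsLocalMax (fun q : ℝ × ℝ => f (q.1, q.2, h q) + ε * (q.1 ^ 2 + q.2 ^ 2)) p := by
  set g := fun q : ℝ × ℝ => f (q.1, q.2, h q) + ε * (q.1 ^ 2 + q.2 ^ 2)
  have hh : ContDiffAt ℝ 2 h p := hC2.contDiffAt (hΩ.mem_nhds hp)
  set t := f (0, 0, 1)
  have hf_vert : ∀ c : ℝ, f (0, 0, c) = c * t := fun c => by
    rw [← smul_eq_mul, ← map_smul]
    simp
  obtain ⟨v, hv₀, hv⟩ := exists_ne_zero_mul_fderiv_fderiv_apply_nonneg hh (hsaddle p hp) t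
  have hline : ∀ s : ℝ, HasDerivAt (fun s : ℝ => p + s • v) v s := fun s => by
    simpa using ((hasDerivAt_id s).smul_const v).const_add p
  have hline₁ : ∀ s : ℝ, HasDerivAt (fun s : ℝ => (p + s • v).1) v.1 s := fun s =>
    (ContinuousLinearMap.fst ℝ ℝ ℝ).hasFDerivAt.comp_hasDerivAt s (hline s)
  have hline₂ : ∀ s : ℝ, HasDerivAt (fun s : ℝ => (p + s • v).2) v.2 s := fun s =>
    (ContinuousLinearMap.snd ℝ ℝ ℝ).hasFDerivAt.comp_hasDerivAt s (hline s)
  set φ' : ℝ → ℝ := fun s => f (v.1, v.2, fderiv ℝ h (p + s • v) v) +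
    ε * (2 * (p + s • v).1 * v.1 + 2 * (p + s • v).2 * v.2)
  have hφ : ∀ᶠ s in 𝓝 (0 : ℝ), HasDerivAt (fun s => g (p + s • v)) (φ' s) s := by
    have hcont : Tendsto (fun s : ℝ => p + s • v) (𝓝 0) (𝓝 p) := by
      simpa using (hline 0).continuousAt.tendsto
    filter_upwards [hcont.eventually (hΩ.mem_nhds hp)] with s hs
    have hhs := (hC2.contDiffAt (hΩ.mem_nhds hs)).differentiableAt two_ne_zero
    refine ((f.hasFDerivAt.comp_hasDerivAt s ((hline₁ s).prodMk ((hline₂ s).prodMk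
      hhs.hasDerivAt_comp_add_smul))).add
        ((((hline₁ s).pow 2).add ((hline₂ s).pow 2)).const_mul ε)).congr_deriv ?_
    simp [φ']
  have hφ' : HasDerivAt φ'
      (t * fderiv ℝ (fderiv ℝ h) p v v + ε * (2 * (v.1 ^ 2 + v.2 ^ 2))) 0 := by
    have hdiff : DifferentiableAt ℝ (fderiv ℝ h) (p + (0 : ℝ) • v) := by
      simpa using (hh.fderiv_right (m := 1) le_rfl).differentiableAt one_ne_zero
    refine ((f.hasFDerivAt.comp_hasDerivAt 0 ((hasDerivAt_const _ v.1).prodMk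
      ((hasDerivAt_const _ v.2).prodMk (hdiff.hasDerivAt_comp_add_smul.clm_apply
        (hasDerivAt_const _ v))))).add (((((hline₁ 0).const_mul 2).mul_const v.1).add
          (((hline₂ 0).const_mul 2).mul_const v.2)).const_mul ε)).congr_deriv ?_
    simp [hf_vert]
    ring
  have hD : 0 < t * fderiv ℝ (fderiv ℝ h) p v v + ε * (2 * (v.1 ^ 2 + v.2 ^ 2)) := by
    obtain hv | hv : v.1 ≠ 0 ∨ v.2 ≠ 0 := by
      contrapose! hv₀
      exact Prod.ext hv₀.1 hv₀.2
    all_goals positivity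
  intro hmax
  have hmax' : IsLocalMax g (p + (0 : ℝ) • v) := by simpa using hmax
  exact not_isLocalMax_of_hasDerivAt_deriv_pos hφ hφ' hD
    (hmax'.comp_continuous (g := fun s : ℝ => p + s • v) (hline 0).continuousAt)

section MaximumPrinciple

variable {Ω K : Set (ℝ × ℝ)} {h : ℝ × ℝ → ℝ}

theorem exists_mem_frontier_lt_comp_graph_add (hΩ : IsOpen Ω) (hC2 : ContDiffOn ℝ 2 h Ω)
    (hsaddle : ∀ p ∈ Ω, dX (dX h) p * dY (dY h) p - (dX (dY h) p) ^ 2 ≤ 0)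
    (hK : IsCompact K) (hKΩ : K ⊆ Ω) (f : ℝ × ℝ × ℝ →L[ℝ] ℝ) {q : ℝ × ℝ} (hq : q ∈ K)
    {δ : ℝ} (hδ : 0 < δ) : ∃ p ∈ frontier K, f (q.1, q.2, h q) < f (p.1, p.2, h p) + δ := by
  have hh : ContinuousOn h K := hC2.continuousOn.mono hKΩ
  obtain ⟨M, hM⟩ := hK.bddAbove_image (f := fun p : ℝ × ℝ => p.1 ^ 2 + p.2 ^ 2) (by fun_prop)
  have hq₀ : 0 ≤ q.1 ^ 2 + q.2 ^ 2 := by positivity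
  have hM₀ : 0 ≤ M := hq₀.trans (hM ⟨q, hq, rfl⟩)
  set ε := δ / (M + 1)
  have hε : 0 < ε := by positivity
  obtain ⟨p, hp, hmax⟩ := hK.exists_mem_frontier_isMaxOn ⟨q, hq⟩ (by fun_prop)
    fun p hp => not_isLocalMax_comp_graph_add_sq hΩ hC2 hsaddle f hε (hKΩ (interior_subset hp))
  refine ⟨p, hp, ?_⟩
  have hpM : p.1 ^ 2 + p.2 ^ 2 ≤ M := hM ⟨p, hK.isClosed.frontier_subset hp, rfl⟩
  have hεM : ε * M < δ := by
    rw [div_mul_eq_mul_div, div_lt_iff₀ (by positivity)]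
    linarith
  have hqp : f (q.1, q.2, h q) + ε * (q.1 ^ 2 + q.2 ^ 2) ≤
      f (p.1, p.2, h p) + ε * (p.1 ^ 2 + p.2 ^ 2) := hmax hq
  nlinarith [mul_le_mul_of_nonneg_left hpM hε.le, mul_nonneg hε.le hq₀]

theorem exists_mem_frontier_le_comp_graph (hΩ : IsOpen Ω) (hC2 : ContDiffOn ℝ 2 h Ω)
    (hsaddle : ∀ p ∈ Ω, dX (dX h) p * dY (dY h) p - (dX (dY h) p) ^ 2 ≤ 0)
    (hK : IsCompact K) (hKΩ : K ⊆ Ω) (f : ℝ × ℝ × ℝ →L[ℝ] ℝ) {q : ℝ × ℝ} (hq : q ∈ K) :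
    ∃ p ∈ frontier K, f (q.1, q.2, h q) ≤ f (p.1, p.2, h p) := by
  have happrox := fun δ (hδ : 0 < δ) =>
    exists_mem_frontier_lt_comp_graph_add hΩ hC2 hsaddle hK hKΩ f hq hδ
  have hcont : ContinuousOn h (frontier K) :=
    hC2.continuousOn.mono (hK.isClosed.frontier_subset.trans hKΩ)
  obtain ⟨p₀, hp₀, -⟩ := happrox 1 one_pos
  obtain ⟨p, hp, hmax⟩ := hK.isCompact_frontier.exists_isMaxOn ⟨p₀, hp₀⟩
    (f := fun p : ℝ × ℝ => f (p.1, p.2, h p)) (by fun_prop)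
  refine ⟨p, hp, le_of_forall_pos_lt_add fun δ hδ => ?_⟩
  obtain ⟨p', hp', hlt⟩ := happrox δ hδ
  exact hlt.trans_le (add_le_add_left (hmax hp') δ)

end MaximumPrinciple

/-- Convex hull property for saddle graphs: if `h` is C² on an open set `Ω` with
`h_xx h_yy - h_xy ^ 2 ≤ 0` everywhere, then for every compact `K ⊆ Ω` the graph of `h` over
`K` lies in the convex hull (in ℝ³) of the graph of `h` over the boundary `∂K`. -/
theorem stmt1 (Ω : Set (ℝ × ℝ)) (hΩ : IsOpen Ω) (h : ℝ × ℝ → ℝ)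
    (hC2 : ContDiffOn ℝ 2 h Ω)
    (hsaddle : ∀ p ∈ Ω, dX (dX h) p * dY (dY h) p - (dX (dY h) p) ^ 2 ≤ 0)
    (K : Set (ℝ × ℝ)) (hK : IsCompact K) (hKΩ : K ⊆ Ω) :
    (fun p : ℝ × ℝ => (p.1, p.2, h p)) '' K ⊆
      convexHull ℝ ((fun p : ℝ × ℝ => (p.1, p.2, h p)) '' (frontier K)) := by
  rintro _ ⟨q, hq, rfl⟩
  by_contra hq_hull
  have hcont : ContinuousOn h (frontier K) :=
    hC2.continuousOn.mono (hK.isClosed.frontier_subset.trans hKΩ)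
  have hS : IsCompact ((fun p : ℝ × ℝ => (p.1, p.2, h p)) '' frontier K) :=
    hK.isCompact_frontier.image_of_continuousOn (by fun_prop)
  obtain ⟨f, u, hfq, hfS⟩ := geometric_hahn_banach_point_closed (convex_convexHull ℝ _)
    hS.convexHull_of_finiteDimensional.isClosed hq_hull
  obtain ⟨p, hp, hle⟩ := exists_mem_frontier_le_comp_graph hΩ hC2 hsaddle hK hKΩ (-f) hq
  have hfp := hfS _ (subset_convexHull ℝ _ ⟨p, hp, rfl⟩)
  simp only [neg_apply, neg_le_neg_iff] at hle
  linarith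
end

section
/- Let ω : ℝ² → ℝ be a homogeneous polynomial of degree n ≥ 2 satisfying ω_xx·ω_yy − ω_xy² ≡ 0. Then there exist a ∈ ℝ and (α, β) ∈ ℝ² such that ω(x,y) = a·(αx + βy)ⁿ for all (x,y). -/
/-!
Put `g = ∂ₓω` and `h = ∂ᵧω`, homogeneous of degree `n - 1`. Euler's identity for `g` and `h`
turns `(n - 1)(g ∂ᵢh - h ∂ᵢg)` into `±X` times the Hessian, so `g ∇h = h ∇g` (trivially
when `n ≤ 1`, as `g` and `h` are then constants). The relation
`g v = h u` survives differentiating `u` and `v`, and a nonzero homogeneous `u` can be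
differentiated down to a nonzero constant; starting from `(u, v) = (g, h)` this shows that `h` is
a constant multiple of `g`. Hence `β ∂ₓω = α ∂ᵧω` for some `(α, β) ≠ 0`. All partial derivatives
of `ω` inherit this relation, so by induction on the degree they are multiples of
`(αx + βy)^(n-1)`, and Euler's identity reassembles `ω` as a multiple of `(αx + βy)^n`.
-/

open MvPolynomial

namespace MvPolynomial

variable {σ R K : Type*}

theorem pderiv_pderiv_comm [CommRing R] (i j : σ) (p : MvPolynomial σ R) :
    pderiv i (pderiv j p) = pderiv j (pderiv i p) := by
  classical
  have h : ⁅pderiv i, pderiv j⁆ = (0 : Derivation R (MvPolynomial σ R) (MvPolynomial σ R)) :=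
    derivation_ext fun k => by
      rw [Derivation.commutator_apply]
      simp [pderiv_X, Pi.single_apply, apply_ite (pderiv _)]
  have := congr($h p)
  rw [Derivation.commutator_apply] at this
  exact sub_eq_zero.1 this

theorem IsHomogeneous.eq_C_coeff_zero [CommSemiring R] {p : MvPolynomial σ R}
    (hp : p.IsHomogeneous 0) : p = C (coeff 0 p) :=
  totalDegree_eq_zero_iff_eq_C.1 ((totalDegree_zero_iff_isHomogeneous _).2 hp)

section Domain

variable [CommRing R] [IsDomain R]

theorem IsHomogeneous.exists_pderiv_ne_zero [CharZero R] [Fintype σ] {p : MvPolynomial σ R}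
    {n : ℕ} (hp : p.IsHomogeneous n) (hn : n ≠ 0) (hp0 : p ≠ 0) : ∃ i, pderiv i p ≠ 0 := by
  by_contra! h
  have h0 : n • p = 0 := by simp [← hp.sum_X_mul_pderiv, h]
  exact hp0 ((smul_eq_zero.1 h0).resolve_left hn)

theorem mul_pderiv_eq_of_mul_eq {g h u v : MvPolynomial σ R} (hg : g ≠ 0) {i : σ}
    (hgh : g * pderiv i h = h * pderiv i g) (huv : g * v = h * u) :
    g * pderiv i v = h * pderiv i u := by
  have hd : pderiv i g * v + g * pderiv i v = pderiv i h * u + h * pderiv i u := by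
    simpa only [pderiv_mul] using congr(pderiv i $huv)
  apply mul_left_cancel₀ hg
  linear_combination g * hd + u * hgh - pderiv i g * huv

theorem IsHomogeneous.mul_pderiv_pderiv_eq_of_hessian_eq_zero [CharZero R]
    {f : MvPolynomial (Fin 2) R} {n : ℕ} (hf : f.IsHomogeneous n)
    (hess : pderiv 0 (pderiv 0 f) * pderiv 1 (pderiv 1 f) - pderiv 0 (pderiv 1 f) ^ 2 = 0)
    (i : Fin 2) : pderiv 0 f * pderiv i (pderiv 1 f) = pderiv 1 f * pderiv i (pderiv 0 f) := by
  have hg : (pderiv 0 f).IsHomogeneous (n - 1) := hf.pderiv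
  have hh : (pderiv 1 f).IsHomogeneous (n - 1) := hf.pderiv
  rcases eq_or_ne (n - 1) 0 with hn | hn
  · rw [hn] at hg hh
    rw [hg.eq_C_coeff_zero, hh.eq_C_coeff_zero, pderiv_C, pderiv_C, mul_zero, mul_zero]
  have eg := hg.sum_X_mul_pderiv
  have eh := hh.sum_X_mul_pderiv
  simp only [Fin.sum_univ_two, nsmul_eq_mul] at eg eh
  rw [pderiv_pderiv_comm 1 0] at eg
  refine sub_eq_zero.1 ((mul_eq_zero.1 ?_).resolve_left (Nat.cast_ne_zero.2 hn))
  fin_cases i <;> simp only [Fin.zero_eta, Fin.mk_one]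
  · linear_combination
      -pderiv 0 (pderiv 1 f) * eg + pderiv 0 (pderiv 0 f) * eh - X 1 * hess
  · rw [pderiv_pderiv_comm 1 0]
    linear_combination
      -pderiv 1 (pderiv 1 f) * eg + pderiv 0 (pderiv 1 f) * eh + X 0 * hess

end Domain

section Field

variable [Field K] [CharZero K] [Fintype σ]

theorem IsHomogeneous.exists_eq_C_mul_of_mul_pderiv_eq {g h : MvPolynomial σ K} {m : ℕ}
    (hg : g.IsHomogeneous m) (hh : h.IsHomogeneous m) (hg0 : g ≠ 0)
    (hgh : ∀ i, g * pderiv i h = h * pderiv i g) : ∃ c, h = C c * g := by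
  suffices key : ∀ k (u v : MvPolynomial σ K), u.IsHomogeneous k → v.IsHomogeneous k →
      u ≠ 0 → g * v = h * u → ∃ c, h = C c * g from key m g h hg hh hg0 (mul_comm g h)
  intro k
  induction k with
  | zero =>
    intro u v hu hv hu0 huv
    rw [hu.eq_C_coeff_zero, hv.eq_C_coeff_zero] at huv
    rw [hu.eq_C_coeff_zero, Ne, C_eq_zero] at hu0
    refine ⟨coeff 0 v / coeff 0 u, ?_⟩
    have hC : (C (coeff 0 v / coeff 0 u) * C (coeff 0 u) : MvPolynomial σ K) = C (coeff 0 v) := by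
      rw [← map_mul, div_mul_cancel₀ _ hu0]
    apply mul_right_cancel₀ (C_eq_zero.not.2 hu0)
    linear_combination -huv - g * hC
  | succ k ih =>
    intro u v hu hv hu0 huv
    obtain ⟨i, hi⟩ := hu.exists_pderiv_ne_zero k.succ_ne_zero hu0
    exact ih _ _ hu.pderiv hv.pderiv hi (mul_pderiv_eq_of_mul_eq hg0 (hgh i) huv)

theorem IsHomogeneous.exists_eq_C_mul_pow_of_pderiv_proportional {f : MvPolynomial σ K}
    {n : ℕ} (hf : f.IsHomogeneous n) {v : σ → K} (hv : v ≠ 0)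
    (hfv : ∀ i j, C (v j) * pderiv i f = C (v i) * pderiv j f) :
    ∃ a, f = C a * (∑ i, C (v i) * X i) ^ n := by
  set ℓ : MvPolynomial σ K := ∑ i, C (v i) * X i
  induction n generalizing f with
  | zero => exact ⟨coeff 0 f, by rw [pow_zero, mul_one]; exact hf.eq_C_coeff_zero⟩
  | succ n ih =>
    obtain ⟨k, hk⟩ : ∃ k, v k ≠ 0 := Function.ne_iff.1 hv
    have hℓ : ℓ ≠ 0 := by
      intro h
      have := congr(coeff (Finsupp.single k 1) $h)
      classical
      exact hk <| by
        simpa [ℓ, coeff_sum, coeff_C_mul, coeff_X, Finsupp.single_eq_single_iff] using this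
    have hdiff : ∀ i, ∃ a, pderiv i f = C a * ℓ ^ n := fun i => ih hf.pderiv fun j l => by
      rw [pderiv_pderiv_comm j i, pderiv_pderiv_comm l i, ← pderiv_C_mul, hfv j l, pderiv_C_mul]
    choose a ha using hdiff
    set t := a k / v k
    have hva : ∀ i, a i = t * v i := by
      intro i
      have := hfv i k
      rw [ha i, ha k, ← mul_assoc, ← mul_assoc, ← map_mul, ← map_mul] at this
      have := C_injective σ K (mul_right_cancel₀ (pow_ne_zero n hℓ) this)
      rw [div_mul_eq_mul_div, eq_div_iff hk]
      linear_combination this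
    have hsum : ∑ i, X i * pderiv i f = C t * ℓ ^ (n + 1) := by
      simp only [ha, hva, map_mul, pow_succ', ℓ, Finset.mul_sum, Finset.sum_mul]
      exact Finset.sum_congr rfl fun i _ => by ring
    have hn : ((n + 1 : ℕ) : K) ≠ 0 := Nat.cast_ne_zero.2 n.succ_ne_zero
    refine ⟨((n + 1 : ℕ) : K)⁻¹ * t, ?_⟩
    calc f = C ((n + 1 : ℕ) : K)⁻¹ * ((n + 1) • f) := by
          rw [nsmul_eq_mul, ← map_natCast C, ← mul_assoc, ← map_mul, inv_mul_cancel₀ hn,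
            map_one, one_mul]
      _ = _ := by rw [← hf.sum_X_mul_pderiv, hsum, ← mul_assoc, ← map_mul]

end Field

end MvPolynomial

theorem stmt3_general (n : ℕ) (ω : MvPolynomial (Fin 2) ℝ)
    (hom : ω.IsHomogeneous n)
    (hflat : pderiv 0 (pderiv 0 ω) * pderiv 1 (pderiv 1 ω)
      - (pderiv 0 (pderiv 1 ω)) ^ 2 = 0) :
    ∃ a α β : ℝ, ∀ x y : ℝ, eval ![x, y] ω = a * (α * x + β * y) ^ n := by
  obtain ⟨α, β, hne, hαβ⟩ : ∃ α β : ℝ, ![α, β] ≠ 0 ∧ C β * pderiv 0 ω = C α * pderiv 1 ω := by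
    by_cases h0 : pderiv 0 ω = 0
    · exact ⟨0, 1, by simp, by simp [h0]⟩
    · obtain ⟨c, hc⟩ := hom.pderiv.exists_eq_C_mul_of_mul_pderiv_eq hom.pderiv h0
        (hom.mul_pderiv_pderiv_eq_of_hessian_eq_zero hflat)
      exact ⟨1, c, by simp, by simp [hc]⟩
  obtain ⟨a, ha⟩ := hom.exists_eq_C_mul_pow_of_pderiv_proportional hne fun i j => by
    fin_cases i <;> fin_cases j <;> simp [hαβ]
  exact ⟨a, α, β, fun x y => by simp [ha, Fin.sum_univ_two]⟩

/-- A homogeneous polynomial `ω` of degree `n ≥ 2` in two variables with identically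
vanishing Hessian determinant is of the form `ω(x,y) = a (αx + βy)^n`. -/
theorem stmt3 (n : ℕ) (hn : 2 ≤ n) (ω : MvPolynomial (Fin 2) ℝ)
    (hom : ω.IsHomogeneous n)
    (hflat : pderiv 0 (pderiv 0 ω) * pderiv 1 (pderiv 1 ω)
      - (pderiv 0 (pderiv 1 ω)) ^ 2 = 0) :
    ∃ a α β : ℝ, ∀ x y : ℝ, eval ![x, y] ω = a * (α * x + β * y) ^ n :=
  stmt3_general n ω hom hflat
end

section
/- Let h(x,y) = xⁿ·w(x,y) with n > 2, where w is real analytic near the origin with w(0, y₀) ≠ 0 for some y₀ ≠ 0. Write ν = (cos θ, sin θ) with cos θ ≠ 0 and h_ν = ⟨∇h, ν⟩. Then for (x,y) with x ≠ 0 near (0, y₀), the normalized gradient ∇h_ν(x,y)/|∇h_ν(x,y)| converges to (±1, 0) as (x,y) → (0, y₀) with x kept of a fixed sign; in particular the line field generated by ∇h_ν extends real analytically across the segment {x = 0} near (0, y₀), and the extended line field is orthogonal to the segment {x = 0} there. -/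
/-! Write `n = k + 2`. Differentiating `h = x^(k+2) w` once along `ν` gives `h_ν = x^(k+1) g`
with `g` analytic and `g(0, y) = (k+2) cos θ w(0, y)`; differentiating once more gives
`∇h_ν = x^k V` with `V = ((k+1) g + x g_x, x g_y)` continuous and
`V(0, y₀) = ((k+1) g(0, y₀), 0) ≠ 0`. On each side of `{x = 0}` the factor `x^k` has constant
sign, so it disappears after normalization, and `∇h_ν / |∇h_ν| → ±V(0, y₀) / |V(0, y₀)|`. -/

open Filter Topology

lemma AnalyticAt.dX {f : ℝ × ℝ → ℝ} {p : ℝ × ℝ} (hf : AnalyticAt ℝ f p) :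
    AnalyticAt ℝ (dX f) p :=
  (ContinuousLinearMap.apply ℝ ℝ ((1 : ℝ), (0 : ℝ))).analyticAt _ |>.comp hf.fderiv

lemma AnalyticAt.dY {f : ℝ × ℝ → ℝ} {p : ℝ × ℝ} (hf : AnalyticAt ℝ f p) :
    AnalyticAt ℝ (dY f) p :=
  (ContinuousLinearMap.apply ℝ ℝ ((0 : ℝ), (1 : ℝ))).analyticAt _ |>.comp hf.fderiv

lemma Filter.EventuallyEq.dX_dY_eq {f g : ℝ × ℝ → ℝ} {p : ℝ × ℝ} (hfg : f =ᶠ[𝓝 p] g) :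
    (dX f p, dY f p) = (dX g p, dY g p) := by
  simp only [dX, dY, hfg.fderiv_eq]

/-- The gradient of `x^(k+1) g` divided by `x^k`. -/
noncomputable def gradCofactor (k : ℕ) (g : ℝ × ℝ → ℝ) (p : ℝ × ℝ) : ℝ × ℝ :=
  ((k + 1) * g p + p.1 * dX g p, p.1 * dY g p)

lemma dX_dY_fst_pow_succ_mul {g : ℝ × ℝ → ℝ} {p : ℝ × ℝ} (hg : DifferentiableAt ℝ g p) (k : ℕ) :
    (dX (fun q => q.1 ^ (k + 1) * g q) p, dY (fun q => q.1 ^ (k + 1) * g q) p) =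
      p.1 ^ k • gradCofactor k g p := by
  have hpow : HasFDerivAt (fun q : ℝ × ℝ => q.1 ^ (k + 1))
      (((k + 1 : ℕ) * p.1 ^ k) • ContinuousLinearMap.fst ℝ ℝ ℝ) p :=
    (hasDerivAt_pow (k + 1) p.1).comp_hasFDerivAt p hasFDerivAt_fst
  have hprod : HasFDerivAt (fun q => q.1 ^ (k + 1) * g q) _ p := hpow.mul hg.hasFDerivAt
  simp only [dX, dY, gradCofactor, hprod.fderiv, Nat.cast_add, Nat.cast_one,
    add_apply, smul_apply, smul_eq_mul,
    ContinuousLinearMap.coe_fst', mul_one, mul_zero, add_zero, Prod.smul_mk]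
  ext <;> ring

lemma tendsto_gradCofactor_of_fst_eq_zero {g : ℝ × ℝ → ℝ} {p : ℝ × ℝ} (hg : AnalyticAt ℝ g p)
    (hp : p.1 = 0) (k : ℕ) : Tendsto (gradCofactor k g) (𝓝 p) (𝓝 ((k + 1) * g p, 0)) := by
  have hc := hg.continuousAt
  have hcX := hg.dX.continuousAt
  have hcY := hg.dY.continuousAt
  have hcont : ContinuousAt (gradCofactor k g) p := by
    unfold gradCofactor
    fun_prop
  simpa [gradCofactor, hp] using hcont.tendsto

lemma tendsto_normalize_of_eventuallyEq_pos_smul {α E : Type*} [NormedAddCommGroup E]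
    [NormedSpace ℝ E] {l : Filter α} {G V : α → E} {t : α → ℝ} {v : E} (hv : v ≠ 0)
    (hV : Tendsto V l (𝓝 v)) (ht : ∀ᶠ a in l, 0 < t a) (hG : ∀ᶠ a in l, G a = t a • V a) :
    Tendsto (fun a => ‖G a‖⁻¹ • G a) l (𝓝 (‖v‖⁻¹ • v)) := by
  refine ((hV.norm.inv₀ (norm_ne_zero_iff.2 hv)).smul hV).congr' ?_
  filter_upwards [ht, hG] with a hta hGa
  rw [hGa, norm_smul_of_nonneg hta.le, smul_smul, mul_inv, mul_right_comm,
    inv_mul_cancel₀ hta.ne', one_mul]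

lemma normalize_mk_zero_eq_sign (c : ℝ) (hc : c ≠ 0) :
    ‖((c, 0) : ℝ × ℝ)‖⁻¹ • ((c, 0) : ℝ × ℝ) = (Real.sign c, 0) := by
  have hnorm : ‖((c, 0) : ℝ × ℝ)‖ = |c| := by simp [Prod.norm_def]
  rcases hc.lt_or_gt with hneg | hpos
  · simp [hnorm, Real.sign_of_neg hneg, abs_of_neg hneg, hneg.ne]
  · simp [hnorm, Real.sign_of_pos hpos, abs_of_pos hpos, hpos.ne']

lemma exists_sign_tendsto_normalize {α : Type*} {l : Filter α} {G V : α → ℝ × ℝ} {t : α → ℝ}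
    {c : ℝ} (hc : c ≠ 0) (hV : Tendsto V l (𝓝 (c, 0))) (ht : ∀ᶠ a in l, 0 < t a)
    (hG : ∀ᶠ a in l, G a = t a • V a) :
    ∃ ε : ℝ, (ε = 1 ∨ ε = -1) ∧ Tendsto (fun a => ‖G a‖⁻¹ • G a) l (𝓝 (ε, 0)) := by
  refine ⟨Real.sign c, (Real.sign_apply_eq_of_ne_zero c hc).symm.imp id id, ?_⟩
  rw [← normalize_mk_zero_eq_sign c hc]
  exact tendsto_normalize_of_eventuallyEq_pos_smul (by simpa using hc) hV ht hG

lemma exists_sign_tendsto_normalize_of_eventuallyEq_fst_pow_smul {G V : ℝ × ℝ → ℝ × ℝ}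
    {p₀ : ℝ × ℝ} {c : ℝ} {k : ℕ} (hc : c ≠ 0) (hV : Tendsto V (𝓝 p₀) (𝓝 (c, 0)))
    (hG : ∀ᶠ p in 𝓝 p₀, G p = p.1 ^ k • V p) :
    (∃ ε : ℝ, (ε = 1 ∨ ε = -1) ∧
      Tendsto (fun p => ‖G p‖⁻¹ • G p) (𝓝[{p | 0 < p.1}] p₀) (𝓝 (ε, 0))) ∧
    (∃ ε : ℝ, (ε = 1 ∨ ε = -1) ∧
      Tendsto (fun p => ‖G p‖⁻¹ • G p) (𝓝[{p | p.1 < 0}] p₀) (𝓝 (ε, 0))) := by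
  constructor
  · exact exists_sign_tendsto_normalize hc (hV.mono_left nhdsWithin_le_nhds)
      (eventually_nhdsWithin_of_forall fun p hp => pow_pos hp k) (nhdsWithin_le_nhds hG)
  · have hG_neg : ∀ᶠ p in 𝓝 p₀, G p = (-p.1) ^ k • ((-1 : ℝ) ^ k • V p) := by
      filter_upwards [hG] with p hp
      rw [hp, smul_smul, ← mul_pow, neg_mul_neg, mul_one]
    have hV_neg : Tendsto (fun p => (-1 : ℝ) ^ k • V p) (𝓝 p₀) (𝓝 ((-1) ^ k * c, 0)) := by
      simpa using hV.const_smul ((-1 : ℝ) ^ k)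
    exact exists_sign_tendsto_normalize (mul_ne_zero (pow_ne_zero k (by norm_num)) hc)
      (hV_neg.mono_left nhdsWithin_le_nhds)
      (eventually_nhdsWithin_of_forall fun p hp => pow_pos (neg_pos.2 hp) k)
      (nhdsWithin_le_nhds hG_neg)

theorem stmt4_general (n : ℕ) (hn : 2 < n) (w : ℝ × ℝ → ℝ) (U : Set (ℝ × ℝ)) (hU : IsOpen U)
    (hw : AnalyticOnNhd ℝ w U)
    (y₀ : ℝ) (hy₀U : ((0 : ℝ), y₀) ∈ U) (hw0 : w (0, y₀) ≠ 0)
    (θ : ℝ) (hθ : Real.cos θ ≠ 0)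
    (h : ℝ × ℝ → ℝ) (hh : h = fun p => p.1 ^ n * w p)
    (hν : ℝ × ℝ → ℝ) (hhν : hν = fun p => Real.cos θ * dX h p + Real.sin θ * dY h p)
    (G : ℝ × ℝ → ℝ × ℝ) (hG : G = fun p => (dX hν p, dY hν p)) :
    (∃ ε : ℝ, (ε = 1 ∨ ε = -1) ∧
      Filter.Tendsto (fun p => ‖G p‖⁻¹ • G p)
        (nhdsWithin ((0 : ℝ), y₀) {p : ℝ × ℝ | 0 < p.1}) (nhds (ε, 0))) ∧
    (∃ ε : ℝ, (ε = 1 ∨ ε = -1) ∧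
      Filter.Tendsto (fun p => ‖G p‖⁻¹ • G p)
        (nhdsWithin ((0 : ℝ), y₀) {p : ℝ × ℝ | p.1 < 0}) (nhds (ε, 0))) := by
  obtain ⟨k, rfl⟩ : ∃ k, n = k + 2 := ⟨n - 2, by omega⟩
  set g : ℝ × ℝ → ℝ := fun q =>
    Real.cos θ * ((k + 2) * w q + q.1 * dX w q) + Real.sin θ * (q.1 * dY w q) with hg_def
  have hg : AnalyticOnNhd ℝ g U := fun p hp =>
    (analyticAt_const.mul ((analyticAt_const.mul (hw p hp)).add
      (analyticAt_fst.mul (hw p hp).dX))).add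
    (analyticAt_const.mul (analyticAt_fst.mul (hw p hp).dY))
  have hνg : ∀ p ∈ U, hν p = p.1 ^ (k + 1) * g p := by
    intro p hp
    have hgrad := dX_dY_fst_pow_succ_mul (hw p hp).differentiableAt (k + 1)
    simp only [gradCofactor, Prod.ext_iff, Prod.smul_mk, smul_eq_mul] at hgrad
    simp only [hhν, hh, hgrad, hg_def]
    push_cast
    ring
  have hGg : ∀ p ∈ U, G p = p.1 ^ k • gradCofactor k g p := fun p hp => by
    rw [hG, ← dX_dY_fst_pow_succ_mul (hg p hp).differentiableAt k]
    exact Filter.EventuallyEq.dX_dY_eq (eventually_of_mem (hU.mem_nhds hp) hνg)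
  have hc : (k + 1) * g (0, y₀) ≠ 0 := by
    simp only [hg_def, zero_mul, mul_zero, add_zero]
    positivity
  exact exists_sign_tendsto_normalize_of_eventuallyEq_fst_pow_smul hc
    (tendsto_gradCofactor_of_fst_eq_zero (hg _ hy₀U) rfl k)
    (eventually_of_mem (hU.mem_nhds hy₀U) hGg)

/-- For `h(x,y) = xⁿ w(x,y)` with `n > 2`, `w` real analytic, `w(0,y₀) ≠ 0`, `y₀ ≠ 0`, and
`ν = (cos θ, sin θ)` with `cos θ ≠ 0`, the normalized gradient of `h_ν = ⟨∇h, ν⟩` converges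
to `(±1, 0)` as `(x,y) → (0,y₀)` with `x` of a fixed sign; in particular the line field it
generates extends across the segment `{x = 0}` orthogonally to it. -/
theorem stmt4 (n : ℕ) (hn : 2 < n) (w : ℝ × ℝ → ℝ) (U : Set (ℝ × ℝ)) (hU : IsOpen U)
    (h0U : ((0 : ℝ), (0 : ℝ)) ∈ U) (hw : AnalyticOnNhd ℝ w U)
    (y₀ : ℝ) (hy₀ : y₀ ≠ 0) (hy₀U : ((0 : ℝ), y₀) ∈ U) (hw0 : w (0, y₀) ≠ 0)
    (θ : ℝ) (hθ : Real.cos θ ≠ 0)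
    (h : ℝ × ℝ → ℝ) (hh : h = fun p => p.1 ^ n * w p)
    (hν : ℝ × ℝ → ℝ) (hhν : hν = fun p => Real.cos θ * dX h p + Real.sin θ * dY h p)
    (G : ℝ × ℝ → ℝ × ℝ) (hG : G = fun p => (dX hν p, dY hν p)) :
    (∃ ε : ℝ, (ε = 1 ∨ ε = -1) ∧
      Filter.Tendsto (fun p => ‖G p‖⁻¹ • G p)
        (nhdsWithin ((0 : ℝ), y₀) {p : ℝ × ℝ | 0 < p.1}) (nhds (ε, 0))) ∧
    (∃ ε : ℝ, (ε = 1 ∨ ε = -1) ∧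
      Filter.Tendsto (fun p => ‖G p‖⁻¹ • G p)
        (nhdsWithin ((0 : ℝ), y₀) {p : ℝ × ℝ | p.1 < 0}) (nhds (ε, 0))) :=
  stmt4_general n hn w U hU hw y₀ hy₀U hw0 θ hθ h hh hν hhν G hG
end

section
/- Parametrize a real analytic surface Σ in S³ near q₀ = (1,0,0,0) by ψ(x,y) = (1, x, y, h(x,y))/√(1 + x² + y² + h(x,y)²) for a real analytic h with h(0,0)=0 and ∇h(0,0)=(0,0). Then the second fundamental form of ψ is a positive multiple of the Hessian of h: (e f; f g) = (1+x²+y²+h²)^{-1/2}·(1+h_x²+h_y²+(x h_x + y h_y − h)²)^{-1/2}·(h_xx h_xy; h_xy h_yy). Consequently, Σ has κ₁κ₂ ≤ 0 near q₀ if and only if det D²h ≤ 0, and a point ψ(x,y) is umbilic for a saddle Σ if and only if D²h(x,y) = 0. -/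
noncomputable def Du {E : Type*} [NormedAddCommGroup E] [NormedSpace ℝ E]
    (f : ℝ × ℝ → E) (p : ℝ × ℝ) : E := fderiv ℝ f p (1, 0)
noncomputable def Dv {E : Type*} [NormedAddCommGroup E] [NormedSpace ℝ E]
    (f : ℝ × ℝ → E) (p : ℝ × ℝ) : E := fderiv ℝ f p (0, 1)

def dot {m : ℕ} (u v : Fin m → ℝ) : ℝ := ∑ i, u i * v i

/-!
Write `ψ = r • X` with `X = (1, x, y, h)` and `r = |X|⁻¹`. The vector
`n = (x h_x + y h_y - h, -h_x, -h_y, 1)` is orthogonal to `X`, `X_x` and `X_y`, hence to `ψ`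
and to its first derivatives. By the product rule each second derivative of `ψ` is
`r • (0, 0, 0, ∂²h)` plus a combination of `X`, `X_x`, `X_y`, so pairing it with `n / |n|` leaves
`r |n|⁻¹ ∂²h`. The factor `r |n|⁻¹` is positive, whence the sign and vanishing statements.
-/

section

variable {E F : Type*} [NormedAddCommGroup E] [NormedSpace ℝ E]
  [NormedAddCommGroup F] [NormedSpace ℝ F]

theorem ContDiffAt.differentiableAt_fderiv_apply {f : E → F} {p : E}
    (hf : ContDiffAt ℝ 2 f p) (w : E) :
    DifferentiableAt ℝ (fun q => fderiv ℝ f q w) p :=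
  ((hf.fderiv_right (m := 1) (by norm_num)).clm_apply contDiffAt_const).differentiableAt
    (by norm_num)

theorem fderiv_fun_smul_apply {r : E → ℝ} {X : E → F} {p : E}
    (hr : DifferentiableAt ℝ r p) (hX : DifferentiableAt ℝ X p) (w : E) :
    fderiv ℝ (fun q => r q • X q) p w = fderiv ℝ r p w • X p + r p • fderiv ℝ X p w := by
  rw [fderiv_fun_smul hr hX, add_comm]
  rfl

theorem fderiv_fderiv_smul_apply {r : E → ℝ} {X : E → F} {p : E}
    (hr : ContDiffAt ℝ 2 r p) (hX : ContDiffAt ℝ 2 X p) (v w : E) :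
    fderiv ℝ (fun q => fderiv ℝ (fun q => r q • X q) q w) p v =
      fderiv ℝ (fun q => fderiv ℝ r q w) p v • X p + fderiv ℝ r p w • fderiv ℝ X p v
        + fderiv ℝ r p v • fderiv ℝ X p w + r p • fderiv ℝ (fun q => fderiv ℝ X q w) p v := by
  have hfirst : (fun q => fderiv ℝ (fun q => r q • X q) q w) =ᶠ[nhds p]
      fun q => fderiv ℝ r q w • X q + r q • fderiv ℝ X q w := by
    filter_upwards [hr.eventually (by simp), hX.eventually (by simp)] with q hrq hXq
    exact fderiv_fun_smul_apply (hrq.differentiableAt (by norm_num))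
      (hXq.differentiableAt (by norm_num)) w
  have hr' := hr.differentiableAt_fderiv_apply w
  have hX' := hX.differentiableAt_fderiv_apply w
  have hr1 := hr.differentiableAt (by norm_num)
  have hX1 := hX.differentiableAt (by norm_num)
  rw [hfirst.fderiv_eq, fderiv_fun_add (hr'.fun_smul hX1) (hr1.fun_smul hX'),
    add_apply, fderiv_fun_smul_apply hr' hX1, fderiv_fun_smul_apply hr1 hX']
  abel

theorem fderiv_pi_apply {ι : Type*} [Fintype ι] {f : E → ι → ℝ} {p : E}
    (hf : DifferentiableAt ℝ f p) (w : E) (i : ι) :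
    fderiv ℝ f p w i = fderiv ℝ (fun q => f q i) p w := by
  rw [fderiv_apply hf]; rfl

end

theorem fderiv_apply_eq_dX_add_dY (f : ℝ × ℝ → ℝ) (p w : ℝ × ℝ) :
    fderiv ℝ f p w = w.1 * dX f p + w.2 * dY f p := by
  have hw : w = w.1 • ((1 : ℝ), (0 : ℝ)) + w.2 • ((0 : ℝ), (1 : ℝ)) := by ext <;> simp
  conv_lhs => rw [hw]
  simp only [map_add, map_smul, smul_eq_mul, dX, dY]

open Matrix

namespace RadialGraph

def graphPoint (h : ℝ × ℝ → ℝ) (q : ℝ × ℝ) : Fin 4 → ℝ := ![1, q.1, q.2, h q]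

variable {h : ℝ × ℝ → ℝ} {p : ℝ × ℝ}

theorem contDiffAt_graphPoint {n : WithTop ℕ∞} (hh : ContDiffAt ℝ n h p) :
    ContDiffAt ℝ n (graphPoint h) p := by
  refine contDiffAt_pi.2 fun i => ?_
  fin_cases i
  exacts [contDiffAt_const, contDiffAt_fst, contDiffAt_snd, hh]

theorem differentiableAt_graphPoint (hh : DifferentiableAt ℝ h p) :
    DifferentiableAt ℝ (graphPoint h) p :=
  differentiableAt_pi.2 fun i => by
    fin_cases i
    exacts [differentiableAt_const _, differentiableAt_fst, differentiableAt_snd, hh]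

theorem fderiv_graphPoint (hh : DifferentiableAt ℝ h p) (w : ℝ × ℝ) :
    fderiv ℝ (graphPoint h) p w = ![0, w.1, w.2, fderiv ℝ h p w] := by
  ext i
  rw [fderiv_pi_apply (differentiableAt_graphPoint hh)]
  fin_cases i <;> simp [graphPoint, fderiv_fst, fderiv_snd]
theorem fderiv_fderiv_graphPoint (hh : ContDiffAt ℝ 2 h p) (v w : ℝ × ℝ) :
    fderiv ℝ (fun q => fderiv ℝ (graphPoint h) q w) p v =
      ![0, 0, 0, fderiv ℝ (fun q => fderiv ℝ h q w) p v] := by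
  have hfirst : (fun q => fderiv ℝ (graphPoint h) q w) =ᶠ[nhds p]
      fun q => ![0, w.1, w.2, fderiv ℝ h q w] := by
    filter_upwards [hh.eventually (by simp)] with q hq
    exact fderiv_graphPoint (hq.differentiableAt (by norm_num)) w
  have hd : DifferentiableAt ℝ (fun q => (![0, w.1, w.2, fderiv ℝ h q w] : Fin 4 → ℝ)) p :=
    differentiableAt_pi.2 fun i => by
      fin_cases i
      exacts [differentiableAt_const _, differentiableAt_const _, differentiableAt_const _,
        hh.differentiableAt_fderiv_apply w]
  rw [hfirst.fderiv_eq]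
  ext i
  rw [fderiv_pi_apply hd]
  fin_cases i <;> simp

noncomputable def radialScale (h : ℝ × ℝ → ℝ) (q : ℝ × ℝ) : ℝ :=
  (√(1 + q.1 ^ 2 + q.2 ^ 2 + h q ^ 2))⁻¹

noncomputable def radialGraph (h : ℝ × ℝ → ℝ) : ℝ × ℝ → Fin 4 → ℝ :=
  fun q => radialScale h q • graphPoint h q

-- The gradient at `graphPoint h q` of the degree-one homogeneous function
-- `(t, x, y, z) ↦ z - t h(x/t, y/t)`, which vanishes on the cone over the surface.
noncomputable def normalField (h : ℝ × ℝ → ℝ) (q : ℝ × ℝ) : Fin 4 → ℝ :=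
  ![q.1 * dX h q + q.2 * dY h q - h q, -dX h q, -dY h q, 1]

noncomputable def unitNormal (h : ℝ × ℝ → ℝ) (q : ℝ × ℝ) : Fin 4 → ℝ :=
  (√(normalField h q ⬝ᵥ normalField h q))⁻¹ • normalField h q

theorem differentiableAt_radialScale (hh : DifferentiableAt ℝ h p) :
    DifferentiableAt ℝ (radialScale h) p := by
  have hpos : 0 < 1 + p.1 ^ 2 + p.2 ^ 2 + h p ^ 2 := by positivity
  exact ((((differentiableAt_const _).add (differentiableAt_fst.pow 2)).add
    (differentiableAt_snd.pow 2)).add (hh.pow 2)).sqrt hpos.ne' |>.inv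
    (Real.sqrt_pos.2 hpos).ne'

theorem contDiffAt_radialScale {n : WithTop ℕ∞} (hh : ContDiffAt ℝ n h p) :
    ContDiffAt ℝ n (radialScale h) p := by
  have hpos : 0 < 1 + p.1 ^ 2 + p.2 ^ 2 + h p ^ 2 := by positivity
  exact ((((contDiffAt_const.add (contDiffAt_fst.pow 2)).add
    (contDiffAt_snd.pow 2)).add (hh.pow 2)).sqrt hpos.ne').inv
    (Real.sqrt_pos.2 hpos).ne'

theorem normalField_dotProduct_graphPoint : normalField h p ⬝ᵥ graphPoint h p = 0 := by
  simp only [normalField, graphPoint, cons_dotProduct_cons, dotProduct_of_isEmpty]; ring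

theorem normalField_dotProduct_tangent (w : ℝ × ℝ) :
    normalField h p ⬝ᵥ ![0, w.1, w.2, fderiv ℝ h p w] = 0 := by
  simp only [normalField, cons_dotProduct_cons, dotProduct_of_isEmpty, fderiv_apply_eq_dX_add_dY]
  ring

theorem normalField_dotProduct_vertical (k : ℝ) : normalField h p ⬝ᵥ ![0, 0, 0, k] = k := by
  simp only [normalField, cons_dotProduct_cons, dotProduct_of_isEmpty]; ring

theorem normalField_dotProduct_self : normalField h p ⬝ᵥ normalField h p =
    1 + dX h p ^ 2 + dY h p ^ 2 + (p.1 * dX h p + p.2 * dY h p - h p) ^ 2 := by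
  simp only [normalField, cons_dotProduct_cons, dotProduct_of_isEmpty]; ring

theorem unitNormal_dotProduct_self : unitNormal h p ⬝ᵥ unitNormal h p = 1 := by
  have hpos : 0 < normalField h p ⬝ᵥ normalField h p := by
    rw [normalField_dotProduct_self]; positivity
  rw [unitNormal, smul_dotProduct, dotProduct_smul, smul_eq_mul, smul_eq_mul, ← mul_assoc,
    ← mul_inv, Real.mul_self_sqrt hpos.le, inv_mul_cancel₀ hpos.ne']

theorem unitNormal_dotProduct_radialGraph : unitNormal h p ⬝ᵥ radialGraph h p = 0 := by
  simp [unitNormal, radialGraph, normalField_dotProduct_graphPoint]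

theorem unitNormal_dotProduct_fderiv_radialGraph (hh : DifferentiableAt ℝ h p) (w : ℝ × ℝ) :
    unitNormal h p ⬝ᵥ fderiv ℝ (radialGraph h) p w = 0 := by
  unfold radialGraph
  rw [fderiv_fun_smul_apply (differentiableAt_radialScale hh) (differentiableAt_graphPoint hh),
    fderiv_graphPoint hh]
  simp only [unitNormal, smul_dotProduct, dotProduct_add, dotProduct_smul,
    normalField_dotProduct_graphPoint, normalField_dotProduct_tangent, smul_zero, add_zero]

theorem fderiv_fderiv_radialGraph_dotProduct_unitNormal (hh : ContDiffAt ℝ 2 h p)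
    (v w : ℝ × ℝ) :
    fderiv ℝ (fun q => fderiv ℝ (radialGraph h) q w) p v ⬝ᵥ unitNormal h p =
      radialScale h p * (√(normalField h p ⬝ᵥ normalField h p))⁻¹ *
        fderiv ℝ (fun q => fderiv ℝ h q w) p v := by
  have h1 := hh.differentiableAt (by norm_num)
  unfold radialGraph
  rw [dotProduct_comm, fderiv_fderiv_smul_apply (contDiffAt_radialScale hh)
    (contDiffAt_graphPoint hh), fderiv_graphPoint h1, fderiv_graphPoint h1,
    fderiv_fderiv_graphPoint hh]
  simp only [unitNormal, smul_dotProduct, dotProduct_add, dotProduct_smul,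
    normalField_dotProduct_graphPoint, normalField_dotProduct_tangent,
    normalField_dotProduct_vertical, smul_eq_mul]
  ring

end RadialGraph

open RadialGraph

theorem mul_mul_sub_sq_nonpos_iff {c e f g : ℝ} (hc : c ≠ 0) :
    c * e * (c * g) - (c * f) ^ 2 ≤ 0 ↔ e * g - f ^ 2 ≤ 0 := by
  rw [show c * e * (c * g) - (c * f) ^ 2 = c ^ 2 * (e * g - f ^ 2) by ring,
    ← mul_zero (c ^ 2), mul_le_mul_iff_of_pos_left (by positivity), mul_zero]

theorem stmt17_general (Ω : Set (ℝ × ℝ))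
    (h : ℝ × ℝ → ℝ) (han : AnalyticOnNhd ℝ h Ω)
    (ψ : ℝ × ℝ → Fin 4 → ℝ)
    (hψ : ψ = fun p i =>
      (![1, p.1, p.2, h p] : Fin 4 → ℝ) i / Real.sqrt (1 + p.1 ^ 2 + p.2 ^ 2 + h p ^ 2))
    (c : ℝ × ℝ → ℝ)
    (hc : c = fun p => (Real.sqrt (1 + p.1 ^ 2 + p.2 ^ 2 + h p ^ 2))⁻¹ *
      (Real.sqrt (1 + dX h p ^ 2 + dY h p ^ 2 +
        (p.1 * dX h p + p.2 * dY h p - h p) ^ 2))⁻¹) :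
    ∃ N : ℝ × ℝ → Fin 4 → ℝ,
      (∀ p ∈ Ω, dot (N p) (N p) = 1 ∧ dot (N p) (ψ p) = 0 ∧
        dot (N p) (Du ψ p) = 0 ∧ dot (N p) (Dv ψ p) = 0) ∧
      (∀ p ∈ Ω,
        dot (Du (Du ψ) p) (N p) = c p * dX (dX h) p ∧
        dot (Du (Dv ψ) p) (N p) = c p * dX (dY h) p ∧
        dot (Dv (Dv ψ) p) (N p) = c p * dY (dY h) p) ∧
      (∀ p ∈ Ω,
        (dot (Du (Du ψ) p) (N p) * dot (Dv (Dv ψ) p) (N p)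
            - (dot (Du (Dv ψ) p) (N p)) ^ 2 ≤ 0 ↔
          dX (dX h) p * dY (dY h) p - (dX (dY h) p) ^ 2 ≤ 0)) ∧
      ((∀ p ∈ Ω, dX (dX h) p * dY (dY h) p - (dX (dY h) p) ^ 2 ≤ 0) →
        ∀ p ∈ Ω,
          ((dot (Du (Du ψ) p) (N p) = 0 ∧ dot (Du (Dv ψ) p) (N p) = 0 ∧
              dot (Dv (Dv ψ) p) (N p) = 0) ↔
            (dX (dX h) p = 0 ∧ dX (dY h) p = 0 ∧ dY (dY h) p = 0))) := by
  have hc0 : ∀ p, c p ≠ 0 := fun p => by subst hc; positivity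
  have hψ' : ψ = radialGraph h := by
    subst hψ; funext q i; simp [radialGraph, radialScale, graphPoint, div_eq_inv_mul]
  have hc' : ∀ p, c p = radialScale h p * (√(normalField h p ⬝ᵥ normalField h p))⁻¹ := by
    subst hc; intro p; rw [normalField_dotProduct_self]; rfl
  subst hψ'
  have hII : ∀ p ∈ Ω, ∀ v w : ℝ × ℝ,
      dot (fderiv ℝ (fun q => fderiv ℝ (radialGraph h) q w) p v) (unitNormal h p) =
        c p * fderiv ℝ (fun q => fderiv ℝ h q w) p v := fun p hp v w => by
    rw [hc']; exact fderiv_fderiv_radialGraph_dotProduct_unitNormal (han p hp).contDiffAt v w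
  -- `Du (Dv f) p` unfolds to `fderiv ℝ (fun q => fderiv ℝ f q (0, 1)) p (1, 0)`.
  have hSFF : ∀ p ∈ Ω,
      dot (Du (Du (radialGraph h)) p) (unitNormal h p) = c p * dX (dX h) p ∧
      dot (Du (Dv (radialGraph h)) p) (unitNormal h p) = c p * dX (dY h) p ∧
      dot (Dv (Dv (radialGraph h)) p) (unitNormal h p) = c p * dY (dY h) p :=
    fun p hp => ⟨hII p hp _ _, hII p hp _ _, hII p hp _ _⟩
  refine ⟨unitNormal h, fun p hp => ?_, hSFF, fun p hp => ?_, fun _ p hp => ?_⟩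
  · have hd := (han p hp).differentiableAt
    exact ⟨unitNormal_dotProduct_self, unitNormal_dotProduct_radialGraph,
      unitNormal_dotProduct_fderiv_radialGraph hd _, unitNormal_dotProduct_fderiv_radialGraph hd _⟩
  · obtain ⟨hE, hF, hG⟩ := hSFF p hp
    rw [hE, hF, hG]
    exact mul_mul_sub_sq_nonpos_iff (hc0 p)
  · obtain ⟨hE, hF, hG⟩ := hSFF p hp
    simp [hE, hF, hG, hc0 p]

/-- For the parametrization `ψ(x,y) = (1, x, y, h(x,y)) / √(1 + x² + y² + h²)` of a real
analytic surface in `S³` near `q₀ = (1,0,0,0)`, there is a unit normal `N` (tangent to `S³`)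
for which the second fundamental form is the stated positive multiple
`(1+x²+y²+h²)^{-1/2} (1+h_x²+h_y²+(x h_x + y h_y - h)²)^{-1/2}` of the Hessian of `h`;
consequently `κ₁κ₂ ≤ 0` iff `det D²h ≤ 0`, and for saddle `Σ` a point is umbilic
(`II = 0`) iff `D²h = 0` there. -/
theorem stmt17 (Ω : Set (ℝ × ℝ)) (hΩ : IsOpen Ω) (h0Ω : ((0 : ℝ), (0 : ℝ)) ∈ Ω)
    (h : ℝ × ℝ → ℝ) (han : AnalyticOnNhd ℝ h Ω)
    (h0 : h (0, 0) = 0) (hgrad : fderiv ℝ h ((0 : ℝ), (0 : ℝ)) = 0)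
    (ψ : ℝ × ℝ → Fin 4 → ℝ)
    (hψ : ψ = fun p i =>
      (![1, p.1, p.2, h p] : Fin 4 → ℝ) i / Real.sqrt (1 + p.1 ^ 2 + p.2 ^ 2 + h p ^ 2))
    (c : ℝ × ℝ → ℝ)
    (hc : c = fun p => (Real.sqrt (1 + p.1 ^ 2 + p.2 ^ 2 + h p ^ 2))⁻¹ *
      (Real.sqrt (1 + dX h p ^ 2 + dY h p ^ 2 +
        (p.1 * dX h p + p.2 * dY h p - h p) ^ 2))⁻¹) :
    ∃ N : ℝ × ℝ → Fin 4 → ℝ,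
      (∀ p ∈ Ω, dot (N p) (N p) = 1 ∧ dot (N p) (ψ p) = 0 ∧
        dot (N p) (Du ψ p) = 0 ∧ dot (N p) (Dv ψ p) = 0) ∧
      (∀ p ∈ Ω,
        dot (Du (Du ψ) p) (N p) = c p * dX (dX h) p ∧
        dot (Du (Dv ψ) p) (N p) = c p * dX (dY h) p ∧
        dot (Dv (Dv ψ) p) (N p) = c p * dY (dY h) p) ∧
      (∀ p ∈ Ω,
        (dot (Du (Du ψ) p) (N p) * dot (Dv (Dv ψ) p) (N p)
            - (dot (Du (Dv ψ) p) (N p)) ^ 2 ≤ 0 ↔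
          dX (dX h) p * dY (dY h) p - (dX (dY h) p) ^ 2 ≤ 0)) ∧
      ((∀ p ∈ Ω, dX (dX h) p * dY (dY h) p - (dX (dY h) p) ^ 2 ≤ 0) →
        ∀ p ∈ Ω,
          ((dot (Du (Du ψ) p) (N p) = 0 ∧ dot (Du (Dv ψ) p) (N p) = 0 ∧
              dot (Dv (Dv ψ) p) (N p) = 0) ↔
            (dX (dX h) p = 0 ∧ dX (dY h) p = 0 ∧ dY (dY h) p = 0))) :=
  stmt17_general Ω h han ψ hψ c hc
end

section
/- Let Σ ⊆ S³ be a surface of the form ψ(x,y) = (1, x, y, h(x,y))/√(1+x²+y²+h²) with h real analytic, det D²h ≤ 0, and suppose D²h vanishes identically along a segment Γ of the line {x = 0} through the origin. Then ψ(Γ) is a geodesic arc of S³ contained in Σ. -/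
open Set

theorem AnalyticOnNhd.dY {f : ℝ × ℝ → ℝ} {s : Set (ℝ × ℝ)} (hf : AnalyticOnNhd ℝ f s) :
    AnalyticOnNhd ℝ (dY f) s := fun p hp =>
  ((ContinuousLinearMap.apply ℝ ℝ ((0 : ℝ), (1 : ℝ))).analyticAt _).comp (hf.fderiv p hp)

theorem DifferentiableAt.hasDerivAt_dY {f : ℝ × ℝ → ℝ} {x y : ℝ}
    (hf : DifferentiableAt ℝ f (x, y)) : HasDerivAt (fun t => f (x, t)) (dY f (x, y)) y :=
  hf.hasFDerivAt.comp_hasDerivAt y ((hasDerivAt_const y x).prodMk (hasDerivAt_id y))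

theorem eq_affine_of_hasDerivAt_of_hasDerivAt_zero {g g' : ℝ → ℝ} {a b : ℝ}
    (hg : ∀ y ∈ Icc a b, HasDerivAt g (g' y) y) (hg' : ∀ y ∈ Icc a b, HasDerivAt g' 0 y) :
    ∀ y ∈ Icc a b, g y = g a + g' a * (y - a) := by
  have hg'_const : ∀ y ∈ Icc a b, g' y = g' a := constant_of_has_deriv_right_zero
    (fun y hy => (hg' y hy).continuousAt.continuousWithinAt)
    (fun y hy => (hg' y (Ico_subset_Icc_self hy)).hasDerivWithinAt)
  have hline : ∀ y, HasDerivAt (fun t => g a + g' a * (t - a)) (g' a) y := fun y => by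
    simpa using ((hasDerivAt_id y).sub_const a).const_mul (g' a) |>.const_add (g a)
  refine eq_of_has_deriv_right_eq (f' := fun _ => g' a)
    (fun y hy => ?_) (fun y _ => (hline y).hasDerivWithinAt)
    (fun y hy => (hg y hy).continuousAt.continuousWithinAt)
    (fun y _ => (hline y).continuousAt.continuousWithinAt) (by simp)
  rw [← hg'_const y (Ico_subset_Icc_self hy)]
  exact (hg y (Ico_subset_Icc_self hy)).hasDerivWithinAt

theorem exists_affine_of_dY_dY_eq_zero {f : ℝ × ℝ → ℝ} {s : Set (ℝ × ℝ)}
    (hf : AnalyticOnNhd ℝ f s) {x a b : ℝ} (hs : ∀ y ∈ Icc a b, (x, y) ∈ s)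
    (hyy : ∀ y ∈ Icc a b, dY (dY f) (x, y) = 0) :
    ∃ α β : ℝ, ∀ y ∈ Icc a b, f (x, y) = α + β * y := by
  have key := eq_affine_of_hasDerivAt_of_hasDerivAt_zero (g := fun t => f (x, t))
    (fun y hy => (hf _ (hs y hy)).differentiableAt.hasDerivAt_dY)
    (fun y hy => hyy y hy ▸ (hf.dY _ (hs y hy)).differentiableAt.hasDerivAt_dY)
  refine ⟨f (x, a) - dY f (x, a) * a, dY f (x, a), fun y hy => ?_⟩
  rw [key y hy]
  ring

theorem exists_finrank_eq_two_forall_smul_mem (α β : ℝ) :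
    ∃ P : Submodule ℝ (Fin 4 → ℝ), Module.finrank ℝ P = 2 ∧
      ∀ c y : ℝ, c • ![1, 0, y, α + β * y] ∈ P := by
  set u : Fin 4 → ℝ := ![1, 0, 0, α]
  set v : Fin 4 → ℝ := ![0, 0, 1, β]
  have hli : LinearIndependent ℝ ![u, v] := by
    rw [LinearIndependent.pair_iff]
    intro s t hst
    simpa [u, v] using And.intro (congrFun hst 0) (congrFun hst 2)
  refine ⟨Submodule.span ℝ {u, v}, ?_, fun c y => ?_⟩
  · rw [← Matrix.range_cons_cons_empty, finrank_span_eq_card hli]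
    simp
  · have hdecomp : (![1, 0, y, α + β * y] : Fin 4 → ℝ) = u + y • v := by
      ext i; fin_cases i <;> simp [u, v, mul_comm]
    rw [hdecomp]
    exact Submodule.smul_mem _ c (Submodule.add_mem _ (Submodule.subset_span (by simp))
      (Submodule.smul_mem _ y (Submodule.subset_span (by simp))))

theorem stmt18_general (Ω : Set (ℝ × ℝ))
    (δ : ℝ)
    (Γ : Set (ℝ × ℝ)) (hΓdef : Γ = {(0 : ℝ)} ×ˢ Set.Icc (-δ) δ) (hΓΩ : Γ ⊆ Ω)
    (h : ℝ × ℝ → ℝ) (han : AnalyticOnNhd ℝ h Ω)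
    (hhess : ∀ p ∈ Γ, dX (dX h) p = 0 ∧ dX (dY h) p = 0 ∧
      dY (dX h) p = 0 ∧ dY (dY h) p = 0)
    (ψ : ℝ × ℝ → Fin 4 → ℝ)
    (hψ : ψ = fun p i =>
      (![1, p.1, p.2, h p] : Fin 4 → ℝ) i / Real.sqrt (1 + p.1 ^ 2 + p.2 ^ 2 + h p ^ 2)) :
    ∃ P : Submodule ℝ (Fin 4 → ℝ), Module.finrank ℝ P = 2 ∧
      ∀ p ∈ Γ, ψ p ∈ P := by
  subst hΓdef
  have hmem : ∀ y ∈ Icc (-δ) δ, ((0 : ℝ), y) ∈ ({(0 : ℝ)} ×ˢ Icc (-δ) δ : Set (ℝ × ℝ)) :=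
    fun y hy => ⟨rfl, hy⟩
  obtain ⟨α, β, hline⟩ := exists_affine_of_dY_dY_eq_zero han (fun y hy => hΓΩ (hmem y hy))
    (fun y hy => (hhess _ (hmem y hy)).2.2.2)
  obtain ⟨P, hP, hcone⟩ := exists_finrank_eq_two_forall_smul_mem α β
  refine ⟨P, hP, ?_⟩
  rintro ⟨x, y⟩ ⟨rfl : x = 0, hy⟩
  have hψy : ψ (0, y) = (Real.sqrt (1 + 0 ^ 2 + y ^ 2 + h (0, y) ^ 2))⁻¹ •
      ![1, 0, y, α + β * y] := by
    ext i; fin_cases i <;> simp [hψ, hline y hy, div_eq_inv_mul]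
  exact hψy ▸ hcone _ _

/-- If `Σ ⊆ S³` is parametrized by `ψ(x,y) = (1,x,y,h(x,y))/√(1+x²+y²+h²)` with `h` real
analytic, `det D²h ≤ 0`, and the Hessian `D²h` vanishes identically along a segment
`Γ = {0} × [-δ, δ]` of the line `{x = 0}` through the origin, then `ψ(Γ)` is a geodesic arc
of `S³`, i.e. it is contained in the great circle `S³ ∩ P` for some 2-dimensional linear
subspace `P ⊆ ℝ⁴` (and it lies in `Σ = ψ(Ω)`). -/
theorem stmt18 (Ω : Set (ℝ × ℝ)) (hΩ : IsOpen Ω)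
    (δ : ℝ) (hδ : 0 < δ)
    (Γ : Set (ℝ × ℝ)) (hΓdef : Γ = {(0 : ℝ)} ×ˢ Set.Icc (-δ) δ) (hΓΩ : Γ ⊆ Ω)
    (h : ℝ × ℝ → ℝ) (han : AnalyticOnNhd ℝ h Ω)
    (hsaddle : ∀ p ∈ Ω, dX (dX h) p * dY (dY h) p - (dX (dY h) p) ^ 2 ≤ 0)
    (hhess : ∀ p ∈ Γ, dX (dX h) p = 0 ∧ dX (dY h) p = 0 ∧
      dY (dX h) p = 0 ∧ dY (dY h) p = 0)
    (ψ : ℝ × ℝ → Fin 4 → ℝ)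
    (hψ : ψ = fun p i =>
      (![1, p.1, p.2, h p] : Fin 4 → ℝ) i / Real.sqrt (1 + p.1 ^ 2 + p.2 ^ 2 + h p ^ 2)) :
    ∃ P : Submodule ℝ (Fin 4 → ℝ), Module.finrank ℝ P = 2 ∧
      ∀ p ∈ Γ, ψ p ∈ P :=
  stmt18_general Ω δ Γ hΓdef hΓΩ h han hhess ψ hψ
end
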